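/- arXiv:1404.4409 — 4 statements merged into one kernel-verified Lean document; each statement's English description precedes it below -/
import Mathlib

section
/- With θ_m = sup_k s_{k,k+m} as above and any s > θ_m, for every t ≥ 0, p ≥ 1, and 0 ≤ n ≤ m-1 one has Δ_{t,t+pm+n}(s) ≤ (1 - c_*^d)^{p(s-θ_m)/d} · (c_*)^{-nd}; consequently there exists p_0 depending only on s such that s_{t,t+pm+n} ≤ s for all p ≥ p_0 and all t. -/
open Finset Set Filter

/-! Since every level has a second weight `≥ c_*`, each `c_{i,j}^d ≤ 1 - c_*^d`; hence raising the
exponent of a level sum from `a` to `b` shrinks it by at least `(1 - c_*^d)^{(b-a)/d}`. A block of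
`m` levels starting at `k` has `Δ_{k,k+m}(s_{k,k+m}) = 1` with `s_{k,k+m} ≤ θ_m < s`, so
`Δ_{k,k+m}(s) ≤ (1 - c_*^d)^{(s-θ_m)/d}`, while each of the `n < m` leftover levels contributes at
most `n_i ≤ c_*^{-d}`. The resulting bound tends to `0` as `p → ∞`, uniformly in `t` and `n`, and
`x ↦ Δ_{t,t'}(x)` is strictly decreasing, so `s_{t,t+pm+n} ≤ s` once the bound drops below `1`. -/

theorem StrictAnti.finsetProd {ι γ R : Type*} [CommMonoidWithZero R] [PartialOrder R]
    [ZeroLEOneClass R] [PosMulStrictMono R] [Nontrivial R] [Preorder γ] {s : Finset ι}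
    {f : ι → γ → R} (hs : s.Nonempty) (hf : ∀ i ∈ s, StrictAnti (f i)) (hf₀ : ∀ i ∈ s, ∀ x, 0 < f i x) :
    StrictAnti fun x ↦ ∏ i ∈ s, f i x :=
  fun _ _ hab ↦ prod_lt_prod_of_nonempty (fun i hi ↦ hf₀ i hi _) (fun i hi ↦ hf i hi hab) hs

theorem strictAnti_sum_rpow {ι : Type*} {J : Finset ι} {w : ι → ℝ} (hJ : J.Nonempty)
    (hw : ∀ j ∈ J, w j ∈ Set.Ioo 0 1) : StrictAnti fun x : ℝ ↦ ∑ j ∈ J, w j ^ x :=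
  fun _ _ hab ↦ sum_lt_sum_of_nonempty hJ fun j hj ↦
    Real.rpow_lt_rpow_of_exponent_gt (hw j hj).1 (hw j hj).2 hab

theorem pow_le_one_sub_pow_of_sum_pow_le_one {ι : Type*} [DecidableEq ι] {J : Finset ι}
    {w : ι → ℝ} {a : ℝ} {d : ℕ} (hJ : 1 < #J) (ha : 0 ≤ a) (hwa : ∀ j ∈ J, a ≤ w j)
    (hsum : ∑ j ∈ J, w j ^ d ≤ 1) {j : ι} (hj : j ∈ J) : w j ^ d ≤ 1 - a ^ d := by
  obtain ⟨j', hj', hne⟩ := exists_mem_ne hJ j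
  have hpair : w j ^ d + w j' ^ d ≤ ∑ k ∈ J, w k ^ d := by
    rw [← sum_pair (f := fun k ↦ w k ^ d) hne.symm]
    refine sum_le_sum_of_subset_of_nonneg (insert_subset hj (singleton_subset_iff.2 hj'))
      fun k hk _ ↦ pow_nonneg (ha.trans (hwa k hk)) d
  have := pow_le_pow_left₀ ha (hwa j' hj') d
  linarith

theorem sum_rpow_le_rpow_mul_sum_rpow {ι : Type*} {J : Finset ι} {w : ι → ℝ} {A : ℝ}
    {d : ℕ} (hd : d ≠ 0) (hw : ∀ j ∈ J, 0 < w j) (hwA : ∀ j ∈ J, w j ^ d ≤ A) {a b : ℝ}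
    (hab : a ≤ b) :
    ∑ j ∈ J, w j ^ b ≤ A ^ ((b - a) / d) * ∑ j ∈ J, w j ^ a := by
  rw [mul_sum]
  refine sum_le_sum fun j hj ↦ ?_
  have hsplit : w j ^ b = (w j ^ d) ^ ((b - a) / d) * w j ^ a := by
    rw [← Real.rpow_natCast, ← Real.rpow_mul (hw j hj).le, ← Real.rpow_add (hw j hj)]
    field_simp
    ring_nf
  rw [hsplit]
  have hexp : 0 ≤ (b - a) / d := div_nonneg (sub_nonneg.2 hab) d.cast_nonneg
  exact mul_le_mul_of_nonneg_right
    (Real.rpow_le_rpow (pow_nonneg (hw j hj).le d) (hwA j hj) hexp)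
    (Real.rpow_nonneg (hw j hj).le a)

theorem sum_rpow_le_rpow_neg {ι : Type*} {J : Finset ι} {w : ι → ℝ} {a σ : ℝ} {d : ℕ}
    (ha : 0 < a) (hwa : ∀ j ∈ J, a ≤ w j) (hw1 : ∀ j ∈ J, w j ≤ 1) (hσ : 0 ≤ σ)
    (hsum : ∑ j ∈ J, w j ^ d ≤ 1) : ∑ j ∈ J, w j ^ σ ≤ a ^ (-(d : ℝ)) := by
  have hcard : #J * a ^ d ≤ 1 := by
    have := card_nsmul_le_sum J (fun j ↦ w j ^ d) (a ^ d)
      fun j hj ↦ pow_le_pow_left₀ ha.le (hwa j hj) d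
    rw [nsmul_eq_mul] at this
    linarith
  calc ∑ j ∈ J, w j ^ σ ≤ ∑ _j ∈ J, (1 : ℝ) :=
        sum_le_sum fun j hj ↦ Real.rpow_le_one (ha.le.trans (hwa j hj)) (hw1 j hj) hσ
    _ = #J := by simp
    _ ≤ (a ^ d)⁻¹ := by rwa [← one_div, le_div_iff₀ (by positivity)]
    _ = a ^ (-(d : ℝ)) := by rw [Real.rpow_neg ha.le, Real.rpow_natCast]

theorem prod_Ioc_add_le_pow {F : ℕ → ℝ} {B : ℝ} (hF : ∀ i, 0 ≤ F i) (hFB : ∀ i, F i ≤ B)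
    (k n : ℕ) : ∏ i ∈ Ioc k (k + n), F i ≤ B ^ n :=
  (prod_le_prod (fun i _ ↦ hF i) fun i _ ↦ hFB i).trans_eq (by simp)

theorem prod_Ioc_add_mul_le_pow_of_block_le {F : ℕ → ℝ} {m : ℕ} {r : ℝ} (hF : ∀ i, 0 ≤ F i)
    (hblock : ∀ k, ∏ i ∈ Ioc k (k + m), F i ≤ r) (t p : ℕ) :
    ∏ i ∈ Ioc t (t + p * m), F i ≤ r ^ p := by
  induction p with
  | zero => simp
  | succ p ih =>
    rw [show t + (p + 1) * m = t + p * m + m by ring,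
      ← prod_Ioc_consecutive F (Nat.le_add_right t (p * m)) (Nat.le_add_right _ m), pow_succ]
    have hprod : 0 ≤ ∏ i ∈ Ioc t (t + p * m), F i := prod_nonneg fun i _ ↦ hF i
    exact mul_le_mul ih (hblock _) (prod_nonneg fun i _ ↦ hF i) (hprod.trans ih)

noncomputable def Delta (nb : ℕ → ℕ) (c : ℕ → ℕ → ℝ) (k k' : ℕ) (x : ℝ) : ℝ :=
  ∏ i ∈ Ioc k k', ∑ j ∈ range (nb i), c i j ^ x

section Delta

variable {nb : ℕ → ℕ} {c : ℕ → ℕ → ℝ}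

theorem sum_range_rpow_nonneg (hc : ∀ i j, j < nb i → 0 < c i j) (i : ℕ) (x : ℝ) :
    0 ≤ ∑ j ∈ range (nb i), c i j ^ x :=
  sum_nonneg fun j hj ↦ Real.rpow_nonneg (hc i j (mem_range.1 hj)).le x

theorem Delta_mul {k l l' : ℕ} (hkl : k ≤ l) (hll' : l ≤ l') (x : ℝ) :
    Delta nb c k l x * Delta nb c l l' x = Delta nb c k l' x :=
  prod_Ioc_consecutive _ hkl hll'

theorem Delta_strictAnti (hnb : ∀ i, 0 < nb i) (hc : ∀ i j, j < nb i → c i j ∈ Set.Ioo 0 1)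
    {k k' : ℕ} (hkk' : k < k') : StrictAnti (Delta nb c k k') := by
  refine StrictAnti.finsetProd (nonempty_Ioc.2 hkk')
    (fun i _ ↦ strictAnti_sum_rpow (nonempty_range_iff.2 (hnb i).ne')
      fun j hj ↦ hc i j (mem_range.1 hj)) fun i _ x ↦ ?_
  exact sum_pos (fun j hj ↦ Real.rpow_pos_of_pos (hc i j (mem_range.1 hj)).1 x)
    (nonempty_range_iff.2 (hnb i).ne')

theorem Delta_le_pow_mul {d : ℕ} {A : ℝ} (hd : d ≠ 0) (hc : ∀ i j, j < nb i → 0 < c i j)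
    (hcA : ∀ i j, j < nb i → c i j ^ d ≤ A) (k k' : ℕ) {a b : ℝ} (hab : a ≤ b) :
    Delta nb c k k' b ≤ (A ^ ((b - a) / d)) ^ (k' - k) * Delta nb c k k' a := by
  calc Delta nb c k k' b
      ≤ ∏ i ∈ Ioc k k', A ^ ((b - a) / d) * ∑ j ∈ range (nb i), c i j ^ a :=
        prod_le_prod (fun i _ ↦ sum_range_rpow_nonneg hc i b)
          fun i _ ↦ sum_rpow_le_rpow_mul_sum_rpow hd (fun j hj ↦ hc i j (mem_range.1 hj))
            (fun j hj ↦ hcA i j (mem_range.1 hj)) hab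
    _ = (A ^ ((b - a) / d)) ^ (k' - k) * Delta nb c k k' a := by
        rw [prod_mul_distrib, prod_const, Nat.card_Ioc, Delta]

theorem Delta_block_le {d m k : ℕ} {A s θ σ : ℝ} (hd : d ≠ 0)
    (hc : ∀ i j, j < nb i → 0 < c i j) (hA0 : 0 < A) (hA1 : A ≤ 1)
    (hcA : ∀ i j, j < nb i → c i j ^ d ≤ A) (hm : m ≠ 0)
    (hs : Delta nb c k (k + m) s = 1) (hsθ : s ≤ θ) (hθσ : θ ≤ σ) :
    Delta nb c k (k + m) σ ≤ A ^ ((σ - θ) / d) :=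
  calc Delta nb c k (k + m) σ
      ≤ (A ^ ((σ - s) / d)) ^ m := by
        simpa [hs] using Delta_le_pow_mul hd hc hcA k (k + m) (hsθ.trans hθσ)
    _ ≤ A ^ ((σ - s) / d) :=
        pow_le_of_le_one (Real.rpow_nonneg hA0.le _) (Real.rpow_le_one hA0.le hA1
          (div_nonneg (by linarith) d.cast_nonneg)) hm
    _ ≤ A ^ ((σ - θ) / d) := Real.rpow_le_rpow_of_exponent_ge hA0 hA1 (by gcongr)

theorem Delta_le_rpow_neg {d : ℕ} {cstar σ : ℝ} (hc : ∀ i j, j < nb i → c i j ∈ Set.Ioo 0 1)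
    (hcstar : 0 < cstar) (hlb : ∀ i j, j < nb i → cstar ≤ c i j)
    (hsum : ∀ i, ∑ j ∈ range (nb i), c i j ^ d ≤ 1) (hσ : 0 ≤ σ) (k n : ℕ) :
    Delta nb c k (k + n) σ ≤ cstar ^ (-((n : ℝ) * d)) := by
  have hlevel (i : ℕ) : ∑ j ∈ range (nb i), c i j ^ σ ≤ cstar ^ (-(d : ℝ)) :=
    sum_rpow_le_rpow_neg hcstar (fun j hj ↦ hlb i j (mem_range.1 hj))
      (fun j hj ↦ (hc i j (mem_range.1 hj)).2.le) hσ (hsum i)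
  calc Delta nb c k (k + n) σ ≤ (cstar ^ (-(d : ℝ))) ^ n :=
        prod_Ioc_add_le_pow (sum_range_rpow_nonneg (fun i j hj ↦ (hc i j hj).1) · σ) hlevel k n
    _ = cstar ^ (-((n : ℝ) * d)) := by
        rw [← Real.rpow_natCast, ← Real.rpow_mul hcstar.le]
        ring_nf

theorem Delta_le_rpow_mul_rpow {d m : ℕ} {A cstar θ σ : ℝ} {s : ℕ → ℝ} (hd : d ≠ 0)
    (hc : ∀ i j, j < nb i → c i j ∈ Set.Ioo 0 1) (hcstar : 0 < cstar)
    (hlb : ∀ i j, j < nb i → cstar ≤ c i j) (hsum : ∀ i, ∑ j ∈ range (nb i), c i j ^ d ≤ 1)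
    (hA0 : 0 < A) (hA1 : A ≤ 1) (hcA : ∀ i j, j < nb i → c i j ^ d ≤ A) (hm : m ≠ 0)
    (hs : ∀ k, Delta nb c k (k + m) (s k) = 1) (hsθ : ∀ k, s k ≤ θ) (hθσ : θ ≤ σ)
    (hσ : 0 ≤ σ) (t p n : ℕ) :
    Delta nb c t (t + p * m + n) σ ≤
      A ^ ((p : ℝ) * (σ - θ) / d) * cstar ^ (-((n : ℝ) * d)) := by
  have hc0 (i j : ℕ) (hj : j < nb i) : 0 < c i j := (hc i j hj).1
  have hblocks : Delta nb c t (t + p * m) σ ≤ (A ^ ((σ - θ) / d)) ^ p :=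
    prod_Ioc_add_mul_le_pow_of_block_le (sum_range_rpow_nonneg hc0 · σ)
      (fun k ↦ Delta_block_le hd hc0 hA0 hA1 hcA hm (hs k) (hsθ k) hθσ) t p
  have hpow : (A ^ ((σ - θ) / d)) ^ p = A ^ ((p : ℝ) * (σ - θ) / d) := by
    rw [← Real.rpow_natCast, ← Real.rpow_mul hA0.le]
    ring_nf
  rw [← Delta_mul (Nat.le_add_right t (p * m)) (Nat.le_add_right _ n), ← hpow]
  exact mul_le_mul hblocks (Delta_le_rpow_neg hc hcstar hlb hsum hσ _ n)
    (prod_nonneg fun i _ ↦ sum_range_rpow_nonneg hc0 i σ)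
    (by positivity)

theorem le_of_Delta_le_one (hnb : ∀ i, 0 < nb i) (hc : ∀ i j, j < nb i → c i j ∈ Set.Ioo 0 1)
    {k k' : ℕ} (hkk' : k < k') {s σ : ℝ} (hs : Delta nb c k k' s = 1)
    (hσ : Delta nb c k k' σ ≤ 1) : s ≤ σ :=
  (Delta_strictAnti hnb hc hkk').le_iff_ge.1 (hσ.trans hs.ge)

end Delta

theorem exists_forall_rpow_mul_rpow_neg_le_one {A δ a e : ℝ} (hA0 : 0 < A) (hA1 : A < 1)
    (hδ : 0 < δ) (ha0 : 0 < a) (ha1 : a ≤ 1) (he : 0 ≤ e) (N : ℕ) :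
    ∃ p₀ : ℕ, ∀ p ≥ p₀, ∀ n ≤ N, A ^ ((p : ℝ) * δ) * a ^ (-((n : ℝ) * e)) ≤ 1 := by
  set C := a ^ (-((N : ℝ) * e))
  have hlim : Tendsto (fun p : ℕ ↦ (A ^ δ) ^ p * C) atTop (nhds 0) := by
    simpa using (tendsto_pow_atTop_nhds_zero_of_lt_one (Real.rpow_nonneg hA0.le δ)
      (Real.rpow_lt_one hA0.le hA1 hδ)).mul_const C
  obtain ⟨p₀, hp₀⟩ := eventually_atTop.1 (hlim.eventually (eventually_le_nhds one_pos))
  refine ⟨p₀, fun p hp n hn ↦ le_trans ?_ (hp₀ p hp)⟩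
  rw [mul_comm (p : ℝ), Real.rpow_mul hA0.le, Real.rpow_natCast]
  exact mul_le_mul_of_nonneg_left (Real.rpow_le_rpow_of_exponent_ge ha0 ha1 (by gcongr))
    (by positivity)

/-- the key estimate `Δ_{t,t+pm+n}(s) ≤ (1-c_*^d)^{p(s-θ_m)/d}·c_*^{-nd}`
for `s > θ_m`, and the consequence `s_{t,t+pm+n} ≤ s` for all large `p`. -/
theorem stmt_3 (d : ℕ) (hd : 1 ≤ d) (nb : ℕ → ℕ) (hn : ∀ i, 2 ≤ nb i)
    (c : ℕ → ℕ → ℝ) (cstar : ℝ) (hcstar : 0 < cstar)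
    (hc : ∀ i j, j < nb i → c i j ∈ Set.Ioo (0 : ℝ) 1)
    (hlb : ∀ i j, j < nb i → cstar ≤ c i j)
    (hsum : ∀ i, ∑ j ∈ Finset.range (nb i), (c i j) ^ d ≤ 1)
    (s : ℕ → ℕ → ℝ)
    (hsol : ∀ k k', k < k' →
      ∏ i ∈ Finset.Ioc k k', ∑ j ∈ Finset.range (nb i), (c i j) ^ (s k k') = 1)
    (hspos : ∀ k k', k < k' → 0 < s k k')
    (m : ℕ) (hm : 1 ≤ m) (θm : ℝ)
    (hθ : IsLUB (Set.range fun k => s k (k + m)) θm)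
    (σ : ℝ) (hσ : θm < σ) :
    (∀ t p n : ℕ, 1 ≤ p → n ≤ m - 1 →
      ∏ i ∈ Finset.Ioc t (t + p * m + n), ∑ j ∈ Finset.range (nb i), (c i j) ^ σ ≤
        (1 - cstar ^ d) ^ ((p : ℝ) * (σ - θm) / d) * cstar ^ (-((n : ℝ) * d))) ∧
    (∃ p₀ : ℕ, ∀ t p n : ℕ, p₀ ≤ p → n ≤ m - 1 → s t (t + p * m + n) ≤ σ) := by
  have hnb (i : ℕ) : 0 < nb i := by have := hn i; omega
  have hcstar1 : cstar < 1 := (hlb 0 0 (hnb 0)).trans_lt (hc 0 0 (hnb 0)).2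
  have hA0 : 0 < 1 - cstar ^ d := sub_pos.2 (pow_lt_one₀ hcstar.le hcstar1 (by omega))
  have hA1 : 1 - cstar ^ d < 1 := sub_lt_self 1 (by positivity)
  have hcA (i j : ℕ) (hj : j < nb i) : c i j ^ d ≤ 1 - cstar ^ d :=
    pow_le_one_sub_pow_of_sum_pow_le_one (by rw [card_range]; exact hn i) hcstar.le
      (fun k hk ↦ hlb i k (mem_range.1 hk)) (hsum i) (mem_range.2 hj)
  have hsθ (k : ℕ) : s k (k + m) ≤ θm := hθ.1 ⟨k, rfl⟩
  have hσ0 : 0 ≤ σ := ((hspos 0 (0 + m) (by omega)).trans_le (hsθ 0)).le.trans hσ.le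
  have hbound := Delta_le_rpow_mul_rpow (by omega) hc hcstar hlb hsum hA0 hA1.le hcA (by omega)
    (fun k ↦ hsol k (k + m) (by omega)) hsθ hσ.le hσ0
  refine ⟨fun t p n _ _ ↦ hbound t p n, ?_⟩
  obtain ⟨p₀, hp₀⟩ := exists_forall_rpow_mul_rpow_neg_le_one (δ := (σ - θm) / d) hA0 hA1
    (div_pos (sub_pos.2 hσ) (by positivity)) hcstar hcstar1.le d.cast_nonneg (m - 1)
  refine ⟨max p₀ 1, fun t p n hp hnm ↦ ?_⟩
  have htk : t < t + p * m + n :=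
    Nat.lt_add_right n (Nat.lt_add_of_pos_right (Nat.mul_pos (by omega) hm))
  refine le_of_Delta_le_one hnb hc htk (hsol t _ htk) ((hbound t p n).trans ?_)
  rw [mul_div_assoc]
  exact hp₀ p (le_of_max_le_left hp) n hnm
end

section
/- If K is a doubling metric space, then the Assouad dimension of K equals lim_{ρ→0} sup_{R<ε} (log N_{ρR,R}(K)) / (−log ρ), and this limit exists and is independent of the choice of ε < diam(K). -/
open Metric Set Filter

/-- `coverNum X r R` : the smallest number `m` of closed `r`-balls needed to cover
any closed `R`-ball in the metric space `X`. -/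
noncomputable def coverNum (X : Type*) [MetricSpace X] (r R : ℝ) : ℕ :=
  sInf {m : ℕ | ∀ x : X, ∃ t : Finset X, t.card ≤ m ∧
    closedBall x R ⊆ ⋃ y ∈ t, closedBall y r}

/-- The Assouad dimension of a metric space. -/
noncomputable def assouadDim (X : Type*) [MetricSpace X] : ℝ :=
  sInf {α : ℝ | 0 ≤ α ∧ ∃ b C : ℝ, 0 < b ∧ 0 < C ∧ ∀ r R : ℝ, 0 < r → r < R → R < b →
    (coverNum X r R : ℝ) ≤ C * (R / r) ^ α}

/-!
For `ρ ∈ (0,1)` let `s(ρ) = sup_{R<ε} log N_{ρR,R} / (-log ρ)`, so that `N_{ρR,R} ≤ ρ^{-s(ρ)}`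
for all `R < ε`. Iterating this single-scale bound with the submultiplicativity
`N_{r,R} ≤ N_{t,R} N_{r,t}` gives `N_{r,R} ≤ ρ^{-s(ρ)} (R/r)^{s(ρ)}` for all `r < R < ε`, so
`dim_A X ≤ s(ρ)` for every `ρ`. Conversely, if `N_{r,R} ≤ C (R/r)^α` below some scale `b`, then
the doubling property bridges the scales between `b` and `ε`, giving `N_{ρR,R} ≤ C' ρ^{-α}` for
all `R < ε`, that is `s(ρ) ≤ α + log C' / (-log ρ)`, which tends to `α` as `ρ → 0`.
-/

open Real Topology

/-- `coverNum X r R` is the least such `m`; since `sInf ∅ = 0`, facts about `coverNum` need some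
finite cover to exist, which doubling provides for all `r, R > 0`. -/
def CoversBallsWith (X : Type*) [MetricSpace X] (m : ℕ) (r R : ℝ) : Prop :=
  ∀ x : X, ∃ t : Finset X, t.card ≤ m ∧ closedBall x R ⊆ ⋃ y ∈ t, closedBall y r

section Covering

variable {X : Type*} [MetricSpace X] {m m' : ℕ} {r r' s R : ℝ}

lemma CoversBallsWith.mono_radius (h : CoversBallsWith X m r R) (hr : r ≤ r') :
    CoversBallsWith X m r' R := fun x => by
  obtain ⟨t, ht, hcov⟩ := h x
  exact ⟨t, ht, hcov.trans (iUnion₂_mono fun y _ => closedBall_subset_closedBall hr)⟩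

lemma CoversBallsWith.trans (h₁ : CoversBallsWith X m s R) (h₂ : CoversBallsWith X m' r s) :
    CoversBallsWith X (m * m') r R := by
  classical
  intro x
  obtain ⟨t, ht, hcov⟩ := h₁ x
  choose u hu hucov using h₂
  refine ⟨t.biUnion u, ?_, ?_⟩
  · calc (t.biUnion u).card ≤ ∑ y ∈ t, (u y).card := Finset.card_biUnion_le
      _ ≤ t.card * m' := Finset.sum_le_card_nsmul t _ m' fun y _ => hu y
      _ ≤ m * m' := Nat.mul_le_mul_right _ ht
  · intro z hz
    obtain ⟨y, hyt, hy⟩ := mem_iUnion₂.1 (hcov hz)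
    obtain ⟨w, hwu, hw⟩ := mem_iUnion₂.1 (hucov y hy)
    exact mem_iUnion₂.2 ⟨w, Finset.mem_biUnion.2 ⟨y, hyt, hwu⟩, hw⟩

lemma coversBallsWith_one_self (R : ℝ) : CoversBallsWith X 1 R R :=
  fun x => ⟨{x}, by simp, by simp⟩

lemma coverNum_le_of_coversBallsWith (h : CoversBallsWith X m r R) : coverNum X r R ≤ m :=
  Nat.sInf_le h

lemma coversBallsWith_coverNum (h : CoversBallsWith X m r R) :
    CoversBallsWith X (coverNum X r R) r R :=
  Nat.sInf_mem (s := {m | CoversBallsWith X m r R}) ⟨m, h⟩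

lemma one_le_coverNum [Nonempty X] (hR : 0 ≤ R) (h : CoversBallsWith X m r R) :
    1 ≤ coverNum X r R := by
  obtain ⟨t, ht, hcov⟩ := coversBallsWith_coverNum h (Classical.arbitrary X)
  obtain ⟨y, hyt, -⟩ := mem_iUnion₂.1 (hcov (mem_closedBall_self hR))
  exact (Finset.card_pos.2 ⟨y, hyt⟩).trans_le ht

end Covering

section Doubling

variable {X : Type*} [MetricSpace X] {N : ℕ} {r r' s R ρ : ℝ}
  (hd : ∀ R, 0 < R → CoversBallsWith X N (R / 2) R)
include hd

lemma coversBallsWith_pow_of_doubling (k : ℕ) (hR : 0 < R) :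
    CoversBallsWith X (N ^ k) (R / 2 ^ k) R := by
  induction k generalizing R with
  | zero => simpa using coversBallsWith_one_self R
  | succ k ih =>
    have h := (hd R hR).trans (ih (half_pos hR))
    rwa [div_div, ← pow_succ', ← pow_succ'] at h

lemma exists_coversBallsWith_mul (hρ : 0 < ρ) :
    ∃ M : ℕ, ∀ R, 0 < R → CoversBallsWith X M (ρ * R) R := by
  obtain ⟨k, hk⟩ := exists_pow_lt_of_lt_one hρ (show (2⁻¹ : ℝ) < 1 by norm_num)
  refine ⟨N ^ k, fun R hR => (coversBallsWith_pow_of_doubling hd k hR).mono_radius ?_⟩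
  rw [div_eq_mul_inv, ← inv_pow, mul_comm]
  exact mul_le_mul_of_nonneg_right hk.le hR.le

lemma coversBallsWith_coverNum_of_doubling (hr : 0 < r) (hR : 0 < R) :
    CoversBallsWith X (coverNum X r R) r R := by
  obtain ⟨M, hM⟩ := exists_coversBallsWith_mul hd (div_pos hr hR)
  exact coversBallsWith_coverNum (m := M) (by simpa [div_mul_cancel₀ r hR.ne'] using hM R hR)

lemma coverNum_le_mul (hr : 0 < r) (hs : 0 < s) (hR : 0 < R) :
    coverNum X r R ≤ coverNum X s R * coverNum X r s :=
  coverNum_le_of_coversBallsWith ((coversBallsWith_coverNum_of_doubling hd hs hR).trans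
    (coversBallsWith_coverNum_of_doubling hd hr hs))

lemma coverNum_anti_radius (hr : 0 < r) (hR : 0 < R) (h : r ≤ r') :
    coverNum X r' R ≤ coverNum X r R :=
  coverNum_le_of_coversBallsWith ((coversBallsWith_coverNum_of_doubling hd hr hR).mono_radius h)

lemma one_le_coverNum_of_doubling [Nonempty X] (hr : 0 < r) (hR : 0 < R) :
    1 ≤ coverNum X r R :=
  one_le_coverNum hR.le (coversBallsWith_coverNum_of_doubling hd hr hR)

end Doubling

def IsAssouadExponent (X : Type*) [MetricSpace X] (α : ℝ) : Prop :=
  0 ≤ α ∧ ∃ b C : ℝ, 0 < b ∧ 0 < C ∧ ∀ r R : ℝ, 0 < r → r < R → R < b →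
    (coverNum X r R : ℝ) ≤ C * (R / r) ^ α

lemma assouadDim_le {X : Type*} [MetricSpace X] {α : ℝ} (h : IsAssouadExponent X α) :
    assouadDim X ≤ α :=
  csInf_le ⟨0, fun _ hβ => hβ.1⟩ h

section Exponent

variable {X : Type*} [MetricSpace X] {N : ℕ} {ε ρ α : ℝ}
  (hd : ∀ R, 0 < R → CoversBallsWith X N (R / 2) R)
include hd

lemma coverNum_pow_mul_le (hρ₀ : 0 < ρ) (hρ₁ : ρ < 1)
    (h : ∀ R ∈ Ioo 0 ε, (coverNum X (ρ * R) R : ℝ) ≤ ρ ^ (-α)) (k : ℕ) :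
    ∀ R ∈ Ioo 0 ε, (coverNum X (ρ ^ k * R) R : ℝ) ≤ (ρ ^ (-α)) ^ k := by
  induction k with
  | zero =>
    intro R _
    simpa using coverNum_le_of_coversBallsWith (coversBallsWith_one_self (X := X) R)
  | succ k ih =>
    rintro R ⟨hR0, hRε⟩
    have hρR : ρ * R ∈ Ioo 0 ε := ⟨mul_pos hρ₀ hR0, lt_of_le_of_lt (by nlinarith) hRε⟩
    have hsplit := coverNum_le_mul hd (by positivity : 0 < ρ ^ (k + 1) * R) hρR.1 hR0
    rw [show ρ ^ (k + 1) * R = ρ ^ k * (ρ * R) by ring] at hsplit ⊢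
    calc (coverNum X (ρ ^ k * (ρ * R)) R : ℝ)
        ≤ coverNum X (ρ * R) R * coverNum X (ρ ^ k * (ρ * R)) (ρ * R) := by exact_mod_cast hsplit
      _ ≤ ρ ^ (-α) * (ρ ^ (-α)) ^ k :=
        mul_le_mul (h R ⟨hR0, hRε⟩) (ih _ hρR) (Nat.cast_nonneg _) (by positivity)
      _ = (ρ ^ (-α)) ^ (k + 1) := (pow_succ' _ _).symm

lemma isAssouadExponent_of_coverNum_mul_le (hε : 0 < ε) (hρ₀ : 0 < ρ) (hρ₁ : ρ < 1) (hα : 0 ≤ α)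
    (h : ∀ R ∈ Ioo 0 ε, (coverNum X (ρ * R) R : ℝ) ≤ ρ ^ (-α)) :
    IsAssouadExponent X α := by
  refine ⟨hα, ε, ρ ^ (-α), hε, rpow_pos_of_pos hρ₀ _, fun r R hr hrR hRε => ?_⟩
  have hR : 0 < R := hr.trans hrR
  obtain ⟨k, hk₁, hk₂⟩ := exists_nat_pow_near_of_lt_one (div_pos hr hR)
    ((div_le_one hR).2 hrR.le) hρ₀ hρ₁
  have hρk : (ρ ^ (-α)) ^ k ≤ (R / r) ^ α := by
    rw [← rpow_natCast, ← rpow_mul hρ₀.le, mul_comm, rpow_mul hρ₀.le, rpow_natCast,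
      ← inv_div, inv_rpow (div_pos hr hR).le, ← rpow_neg (div_pos hr hR).le]
    exact rpow_le_rpow_of_nonpos (div_pos hr hR) hk₂ (neg_nonpos.2 hα)
  calc (coverNum X r R : ℝ) ≤ coverNum X (ρ ^ (k + 1) * R) R := by
        exact_mod_cast coverNum_anti_radius hd (by positivity) hR ((lt_div_iff₀ hR).1 hk₁).le
    _ ≤ (ρ ^ (-α)) ^ (k + 1) := coverNum_pow_mul_le hd hρ₀ hρ₁ h (k + 1) R ⟨hR, hRε⟩
    _ = ρ ^ (-α) * (ρ ^ (-α)) ^ k := pow_succ' _ _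
    _ ≤ ρ ^ (-α) * (R / r) ^ α := by gcongr

lemma exists_coverNum_mul_le_mul_rpow (hε : 0 < ε) (hα : IsAssouadExponent X α) :
    ∃ C : ℝ, 1 ≤ C ∧ ∀ ρ ∈ Ioo (0 : ℝ) 1, ∀ R ∈ Ioo 0 ε,
      (coverNum X (ρ * R) R : ℝ) ≤ C * ρ ^ (-α) := by
  obtain ⟨hα0, b, C, hb, hC, hadm⟩ := hα
  set θ := min (1 / 2) (b / (2 * ε))
  have hθ0 : 0 < θ := lt_min (by norm_num) (by positivity)
  have hθ1 : θ ≤ 1 := (min_le_left _ _).trans (by norm_num)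
  have hθb : ∀ R ∈ Ioo 0 ε, θ * R < b := fun R hR => by
    calc θ * R ≤ b / (2 * ε) * ε := mul_le_mul (min_le_right _ _) hR.2.le hR.1.le (by positivity)
      _ < b := by field_simp; linarith
  obtain ⟨M, hM⟩ := exists_coversBallsWith_mul hd hθ0
  refine ⟨(M + 1) * (C + 1), by nlinarith, fun ρ ⟨hρ₀, hρ₁⟩ R hR => ?_⟩
  have hMR : (coverNum X (θ * R) R : ℝ) ≤ M := by
    exact_mod_cast coverNum_le_of_coversBallsWith (hM R hR.1)
  have hρα : 1 ≤ ρ ^ (-α) := one_le_rpow_of_pos_of_le_one_of_nonpos hρ₀ hρ₁.le (by linarith)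
  rcases lt_or_ge ρ θ with hρθ | hθρ
  · have hsmall : (coverNum X (ρ * R) (θ * R) : ℝ) ≤ C * ρ ^ (-α) := by
      calc (coverNum X (ρ * R) (θ * R) : ℝ) ≤ C * (θ * R / (ρ * R)) ^ α :=
            hadm _ _ (mul_pos hρ₀ hR.1) (by nlinarith [hR.1]) (hθb R hR)
        _ = C * (θ ^ α * ρ ^ (-α)) := by
            rw [mul_div_mul_right _ _ hR.1.ne', div_eq_mul_inv, mul_rpow hθ0.le (inv_nonneg.2 hρ₀.le),
              inv_rpow hρ₀.le, rpow_neg hρ₀.le]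
        _ ≤ C * ρ ^ (-α) := by
            gcongr
            exact mul_le_of_le_one_left (by positivity) (rpow_le_one hθ0.le hθ1 hα0)
    calc (coverNum X (ρ * R) R : ℝ)
        ≤ coverNum X (θ * R) R * coverNum X (ρ * R) (θ * R) := by
          exact_mod_cast coverNum_le_mul hd (mul_pos hρ₀ hR.1) (mul_pos hθ0 hR.1) hR.1
      _ ≤ M * (C * ρ ^ (-α)) := mul_le_mul hMR hsmall (Nat.cast_nonneg _) (Nat.cast_nonneg _)
      _ ≤ (M + 1) * (C + 1) * ρ ^ (-α) := by nlinarith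
  · calc (coverNum X (ρ * R) R : ℝ) ≤ coverNum X (θ * R) R := by
          exact_mod_cast coverNum_anti_radius hd (mul_pos hθ0 hR.1) hR.1
            (mul_le_mul_of_nonneg_right hθρ hR.1.le)
      _ ≤ M := hMR
      _ ≤ (M + 1) * (C + 1) := by nlinarith [(Nat.cast_nonneg M : (0 : ℝ) ≤ M)]
      _ ≤ (M + 1) * (C + 1) * ρ ^ (-α) := le_mul_of_one_le_right (by positivity) hρα

end Exponent

lemma log_div_neg_log_le_iff {n ρ a : ℝ} (hn : 0 < n) (hρ₀ : 0 < ρ) (hρ₁ : ρ < 1) :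
    log n / -log ρ ≤ a ↔ n ≤ ρ ^ (-a) := by
  rw [div_le_iff₀ (neg_pos.2 (log_neg hρ₀ hρ₁)), ← log_le_log_iff hn (rpow_pos_of_pos hρ₀ _),
    log_rpow hρ₀, neg_mul_comm]

noncomputable def coverProfile (X : Type*) [MetricSpace X] (ε ρ : ℝ) : ℝ :=
  ⨆ R ∈ Ioo (0 : ℝ) ε, log (coverNum X (ρ * R) R) / (-log ρ)

section Profile

variable {X : Type*} [MetricSpace X] [Nonempty X] {N : ℕ} {ε ρ α : ℝ}
  (hd : ∀ R, 0 < R → CoversBallsWith X N (R / 2) R)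
include hd

lemma le_coverProfile (hρ₀ : 0 < ρ) (hρ₁ : ρ < 1) {R : ℝ} (hR : R ∈ Ioo 0 ε) :
    log (coverNum X (ρ * R) R) / (-log ρ) ≤ coverProfile X ε ρ := by
  obtain ⟨M, hM⟩ := exists_coversBallsWith_mul hd hρ₀
  have hbound : ∀ R' ∈ Ioo 0 ε, log (coverNum X (ρ * R') R') / (-log ρ) ≤ log M / (-log ρ) :=
    fun R' hR' => by
      have hpos := one_le_coverNum_of_doubling hd (mul_pos hρ₀ hR'.1) hR'.1
      gcongr
      · exact neg_nonneg.2 (log_nonpos hρ₀.le hρ₁.le)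
      · exact_mod_cast coverNum_le_of_coversBallsWith (hM R' hR'.1)
  have hbdd : BddAbove (range fun R' => ⨆ _ : R' ∈ Ioo 0 ε,
      log (coverNum X (ρ * R') R') / (-log ρ)) := by
    refine ⟨log M / -log ρ, ?_⟩
    rintro _ ⟨R', rfl⟩
    exact Real.iSup_le (hbound R') (div_nonneg (log_natCast_nonneg M)
      (neg_nonneg.2 (log_nonpos hρ₀.le hρ₁.le)))
  exact (ciSup_pos hR).symm.le.trans (le_ciSup hbdd R)

lemma coverProfile_nonneg (hρ₀ : 0 < ρ) (hρ₁ : ρ < 1) : 0 ≤ coverProfile X ε ρ :=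
  iSup_nonneg fun R => iSup_nonneg fun hR => div_nonneg
    (log_nonneg (by exact_mod_cast one_le_coverNum_of_doubling hd (mul_pos hρ₀ hR.1) hR.1))
    (neg_nonneg.2 (log_nonpos hρ₀.le hρ₁.le))

lemma isAssouadExponent_coverProfile (hε : 0 < ε) (hρ₀ : 0 < ρ) (hρ₁ : ρ < 1) :
    IsAssouadExponent X (coverProfile X ε ρ) :=
  isAssouadExponent_of_coverNum_mul_le hd hε hρ₀ hρ₁ (coverProfile_nonneg hd hρ₀ hρ₁)
    fun R hR => by
      have hpos := one_le_coverNum_of_doubling hd (mul_pos hρ₀ hR.1) hR.1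
      exact (log_div_neg_log_le_iff (by exact_mod_cast hpos) hρ₀ hρ₁).1
        (le_coverProfile hd hρ₀ hρ₁ hR)

lemma exists_coverProfile_le_add (hε : 0 < ε) (hα : IsAssouadExponent X α) :
    ∃ C : ℝ, ∀ ρ ∈ Ioo (0 : ℝ) 1, coverProfile X ε ρ ≤ α + log C / -log ρ := by
  obtain ⟨C, hC, hcov⟩ := exists_coverNum_mul_le_mul_rpow hd hε hα
  refine ⟨C, fun ρ ⟨hρ₀, hρ₁⟩ => ?_⟩
  have hlog : 0 < -log ρ := neg_pos.2 (log_neg hρ₀ hρ₁)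
  have hA : 0 ≤ α + log C / -log ρ := add_nonneg hα.1 (div_nonneg (log_nonneg hC) hlog.le)
  refine Real.iSup_le (fun R => Real.iSup_le (fun hR => ?_) hA) hA
  have hpos := one_le_coverNum_of_doubling hd (mul_pos hρ₀ hR.1) hR.1
  rw [div_le_iff₀ hlog, add_mul, div_mul_cancel₀ _ hlog.ne']
  calc log (coverNum X (ρ * R) R) ≤ log (C * ρ ^ (-α)) :=
        log_le_log (by exact_mod_cast hpos) (hcov ρ ⟨hρ₀, hρ₁⟩ R hR)
    _ = α * -log ρ + log C := by
        rw [log_mul (by positivity) (by positivity), log_rpow hρ₀]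
        ring

end Profile

theorem stmt_5_general (X : Type*) [MetricSpace X] [Nonempty X]
    (hdoub : ∃ N : ℕ, ∀ (x : X) (R : ℝ), 0 < R → ∃ t : Finset X,
      t.card ≤ N ∧ closedBall x R ⊆ ⋃ y ∈ t, closedBall y (R / 2))
    (ε : ℝ) (hε : 0 < ε) :
    Tendsto (fun ρ : ℝ => ⨆ R ∈ Set.Ioo (0 : ℝ) ε,
        Real.log (coverNum X (ρ * R) R) / (-Real.log ρ))
      (nhdsWithin 0 (Set.Ioo (0 : ℝ) 1)) (nhds (assouadDim X)) := by
  obtain ⟨N, hN⟩ := hdoub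
  have hd : ∀ R, 0 < R → CoversBallsWith X N (R / 2) R := fun R hR x => hN x R hR
  change Tendsto (coverProfile X ε) _ _
  refine tendsto_order.2 ⟨fun a ha => ?_, fun c hc => ?_⟩
  · filter_upwards [self_mem_nhdsWithin] with ρ hρ
    exact ha.trans_le (assouadDim_le (isAssouadExponent_coverProfile hd hε hρ.1 hρ.2))
  · obtain ⟨α, hα, hαc⟩ := exists_lt_of_csInf_lt (s := {α | IsAssouadExponent X α})
      ⟨_, isAssouadExponent_coverProfile hd hε one_half_pos one_half_lt_one⟩ hc
    obtain ⟨C, hC⟩ := exists_coverProfile_le_add hd hε hα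
    have hlim : Tendsto (fun ρ => α + log C / -log ρ) (𝓝[Ioo 0 1] 0) (𝓝 α) := by
      have hlog : Tendsto (fun ρ => -log ρ) (𝓝[Ioo 0 1] 0) atTop :=
        tendsto_neg_atBot_atTop.comp
          (tendsto_log_nhdsGT_zero.mono_left (nhdsWithin_mono _ Ioo_subset_Ioi_self))
      simpa using tendsto_const_nhds.add (tendsto_const_nhds.div_atTop hlog)
    filter_upwards [self_mem_nhdsWithin, hlim.eventually (gt_mem_nhds hαc)] with ρ hρ hlt
    exact (hC ρ hρ).trans_lt hlt

/-- for a doubling metric space `X` of positive diameter and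
any `0 < ε < diam X`,
`dim_A X = lim_{ρ→0} sup_{R<ε} log N_{ρR,R}(X) / (−log ρ)`,
in particular the limit exists and is independent of `ε`. -/
theorem stmt_5 (X : Type*) [MetricSpace X] [Nonempty X]
    (hdoub : ∃ N : ℕ, ∀ (x : X) (R : ℝ), 0 < R → ∃ t : Finset X,
      t.card ≤ N ∧ closedBall x R ⊆ ⋃ y ∈ t, closedBall y (R / 2))
    (hdiam : 0 < EMetric.diam (Set.univ : Set X))
    (ε : ℝ) (hε : 0 < ε) (hεdiam : ENNReal.ofReal ε < EMetric.diam (Set.univ : Set X)) :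
    Tendsto (fun ρ : ℝ => ⨆ R ∈ Set.Ioo (0 : ℝ) ε,
        Real.log (coverNum X (ρ * R) R) / (-Real.log ρ))
      (nhdsWithin 0 (Set.Ioo (0 : ℝ) 1)) (nhds (assouadDim X)) :=
  stmt_5_general X hdoub ε hε
end

section
/- In the Moran construction with c_* = inf_{i,j} c_{i,j} > 0, for every finite word u, every s > 0, and every δ ∈ (0, c_*), one has the identity 1 = ∑_{u*v ∈ A_u(δ)} (c_v)^s / ∏_{p=|u|+1}^{|u|+|v|} (∑_{q=1}^{n_p} (c_{p,q})^s), where A_u(δ) = { u*v : c_v ≤ δ < c_{v⁻} } is the δ-stopping set below u. -/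
open Finset Set

/-- A word `v` (a list of letters, letters being `0`-based) is valid starting at
level `start` if its `i`-th letter is one of the `n (start + i)` available letters. -/
def ValidFrom (n : ℕ → ℕ) (start : ℕ) (v : List ℕ) : Prop :=
  ∀ i, i < v.length → v.getD i 0 < n (start + i)

/-- `wt c start v` : the contraction ratio `c_v` of a word `v` starting at level
`start`, i.e. the product of the ratios along its letters. (`wt c start [] = 1`.) -/
noncomputable def wt (c : ℕ → ℕ → ℝ) (start : ℕ) (v : List ℕ) : ℝ :=
  ∏ i ∈ Finset.range v.length, c (start + i) (v.getD i 0)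

/-- The `δ`-stopping set `A_u(δ)` below a word `u`, recorded by the extensions `v`:
valid nonempty words `v` with `c_v ≤ δ < c_{v⁻}`. -/
def stoppingSet (n : ℕ → ℕ) (c : ℕ → ℕ → ℝ) (u : List ℕ) (δ : ℝ) : Set (List ℕ) :=
  {v | ValidFrom n u.length v ∧ v ≠ [] ∧
    wt c u.length v ≤ δ ∧ δ < wt c u.length v.dropLast}

/-! The normalised weights `p_{k,j} = c_{k,j}^s / ∑_q c_{k,q}^s` form a probability vector at every
level `k`, and the summand of the identity is the product of these weights along `v`. Splitting the
stopping set by the first letter `j` of `v` leaves the stopping set one level deeper with threshold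
`δ / c_{k,j}`, so the sum is `∑_j p_{k,j} · 1 = 1` by induction on the depth of the tree. The depth is
bounded because `c_{k,j}^d ≤ 1 - c_*^d < 1` uniformly, which follows from `∑_j c_{k,j}^d ≤ 1`,
`n_k ≥ 2` and `c_{k,j} ≥ c_*`. -/

lemma pow_le_one_sub_pow_of_sum_pow_le_one_s7 {m d : ℕ} (hm : 2 ≤ m) {f : ℕ → ℝ} {a : ℝ}
    (ha : 0 ≤ a) (hf : ∀ j < m, a ≤ f j) (hsum : ∑ j ∈ range m, f j ^ d ≤ 1)
    {j : ℕ} (hj : j < m) : f j ^ d ≤ 1 - a ^ d := by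
  set j' := if j = 0 then 1 else 0
  have hj' : j' < m := by unfold j'; split_ifs <;> omega
  have hne : j ≠ j' := by unfold j'; split_ifs <;> omega
  have hpair : f j ^ d + f j' ^ d ≤ ∑ q ∈ range m, f q ^ d := by
    rw [← sum_pair (f := fun q => f q ^ d) hne]
    refine sum_le_sum_of_subset_of_nonneg ?_ fun q hq _ => ?_
    · exact insert_subset (mem_range.2 hj) (singleton_subset_iff.2 (mem_range.2 hj'))
    · exact pow_nonneg (ha.trans (hf q (mem_range.1 hq))) d
  have ha' : a ^ d ≤ f j' ^ d := pow_le_pow_left₀ ha (hf j' hj') d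
  linarith

section Words

variable (n : ℕ → ℕ) (c : ℕ → ℕ → ℝ)

lemma wt_nil (k : ℕ) : wt c k [] = 1 := by
  simp [wt]

lemma wt_cons (k j : ℕ) (v : List ℕ) : wt c k (j :: v) = c k j * wt c (k + 1) v := by
  rw [wt, wt, List.length_cons, prod_range_succ', mul_comm]
  congr 1
  refine prod_congr rfl fun i _ => ?_
  rw [List.getD_cons_succ, add_right_comm, add_assoc]

lemma validFrom_cons {k j : ℕ} {v : List ℕ} :
    ValidFrom n k (j :: v) ↔ j < n k ∧ ValidFrom n (k + 1) v := by
  simp only [ValidFrom, List.length_cons]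
  constructor
  · intro h
    refine ⟨by simpa using h 0 (by omega), fun i hi => ?_⟩
    simpa [add_right_comm, add_assoc] using h (i + 1) (by omega)
  · rintro ⟨hj, hv⟩ (_ | i) hi
    · simpa using hj
    · simpa [add_right_comm, add_assoc] using hv i (by omega)

lemma ValidFrom.dropLast {k : ℕ} {v : List ℕ} (hv : ValidFrom n k v) :
    ValidFrom n k v.dropLast := by
  intro i hi
  rw [List.length_dropLast] at hi
  rw [List.getD_eq_getElem _ _ (by rwa [List.length_dropLast]), List.getElem_dropLast,
    ← List.getD_eq_getElem _ 0]
  exact hv i (by omega)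

variable {n c}

lemma wt_le_one (hc0 : ∀ k j, j < n k → 0 ≤ c k j) (hc1 : ∀ k j, j < n k → c k j ≤ 1)
    {k : ℕ} {v : List ℕ} (hv : ValidFrom n k v) : wt c k v ≤ 1 :=
  prod_le_one (fun i hi => hc0 _ _ (hv i (mem_range.1 hi)))
    (fun i hi => hc1 _ _ (hv i (mem_range.1 hi)))

lemma wt_rpow_div_prod_sum_rpow (hc0 : ∀ k j, j < n k → 0 ≤ c k j) (s : ℝ) {k : ℕ}
    {v : List ℕ} (hv : ValidFrom n k v) :
    wt c k v ^ s / ∏ i ∈ range v.length, ∑ q ∈ range (n (k + i)), c (k + i) q ^ s =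
      wt (fun k j => c k j ^ s / ∑ q ∈ range (n k), c k q ^ s) k v := by
  rw [wt, wt, prod_div_distrib,
    Real.finsetProd_rpow _ _ fun i hi => hc0 _ _ (hv i (mem_range.1 hi))]

variable (n c)

/-- For `δ < 1` this is `stoppingSet n c u δ` with `|u| = k`; for `1 ≤ δ` it is `{[]}` rather than
`∅`, so that splitting by the first letter works for every `δ`. -/
def stoppingCut (k : ℕ) (δ : ℝ) : Set (List ℕ) :=
  {v | ValidFrom n k v ∧ wt c k v ≤ δ ∧ (v = [] ∨ δ < wt c k v.dropLast)}

variable {n c}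

lemma stoppingSet_eq_stoppingCut {u : List ℕ} {δ : ℝ} (hδ : δ < 1) :
    stoppingSet n c u δ = stoppingCut n c u.length δ := by
  ext v
  rcases eq_or_ne v [] with rfl | hv
  · simp [stoppingSet, stoppingCut, wt_nil, hδ.not_ge]
  · simp [stoppingSet, stoppingCut, hv]

lemma stoppingCut_of_one_le (hc0 : ∀ k j, j < n k → 0 ≤ c k j)
    (hc1 : ∀ k j, j < n k → c k j ≤ 1) {k : ℕ} {δ : ℝ} (hδ : 1 ≤ δ) :
    stoppingCut n c k δ = {[]} := by
  ext v
  refine ⟨fun ⟨hv, _, hlast⟩ => hlast.resolve_right fun hlt => ?_, ?_⟩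
  · exact (hlt.trans_le (wt_le_one hc0 hc1 (hv.dropLast n))).not_ge hδ
  · rintro rfl
    exact ⟨fun i hi => absurd hi (by simp), by rwa [wt_nil], Or.inl rfl⟩

lemma cons_mem_stoppingCut_iff (hc : ∀ k j, j < n k → 0 < c k j) {k j : ℕ} {t : List ℕ}
    {δ : ℝ} (hδ : δ < 1) :
    j :: t ∈ stoppingCut n c k δ ↔ j < n k ∧ t ∈ stoppingCut n c (k + 1) (δ / c k j) := by
  simp only [stoppingCut, Set.mem_ofPred_eq, validFrom_cons, wt_cons, reduceCtorEq, false_or]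
  constructor
  · rintro ⟨⟨hj, ht⟩, hle, hlt⟩
    have hcj := hc k j hj
    refine ⟨hj, ht, (le_div_iff₀' hcj).2 hle, ?_⟩
    rcases eq_or_ne t [] with rfl | hne
    · exact Or.inl rfl
    · rw [List.dropLast_cons_of_ne_nil hne, wt_cons] at hlt
      exact Or.inr ((div_lt_iff₀' hcj).2 hlt)
  · rintro ⟨hj, ht, hle, hlast⟩
    have hcj := hc k j hj
    refine ⟨⟨hj, ht⟩, (le_div_iff₀' hcj).1 hle, ?_⟩
    rcases eq_or_ne t [] with rfl | hne
    · simpa [wt_nil] using hδ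
    · rw [List.dropLast_cons_of_ne_nil hne, wt_cons]
      exact (div_lt_iff₀' hcj).1 (hlast.resolve_left hne)

lemma stoppingCut_eq_biUnion (hc : ∀ k j, j < n k → 0 < c k j) {k : ℕ} {δ : ℝ} (hδ : δ < 1) :
    stoppingCut n c k δ =
      ⋃ j ∈ (Finset.range (n k) : Set ℕ), (j :: ·) '' stoppingCut n c (k + 1) (δ / c k j) := by
  ext (_ | ⟨j, t⟩)
  · simp [stoppingCut, wt_nil, hδ.not_ge]
  · simp [cons_mem_stoppingCut_iff hc hδ, and_comm]

/-- Each descent divides `δ` by some `c_{k,j}`, multiplying `δ^d` by at least `ρ⁻¹`; so after `N`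
steps the threshold exceeds `1` and the cut is `{[]}`. -/
theorem stoppingCut_finite_and_finsum_wt_eq_one {p : ℕ → ℕ → ℝ}
    (hp : ∀ k, ∑ j ∈ range (n k), p k j = 1) {d : ℕ} {ρ : ℝ}
    (hc : ∀ k j, j < n k → 0 < c k j) (hc1 : ∀ k j, j < n k → c k j ≤ 1)
    (hρ : ∀ k j, j < n k → c k j ^ d ≤ ρ) (N : ℕ) {k : ℕ} {δ : ℝ} (hδ : 0 < δ)
    (hN : ρ ^ N < δ ^ d) :
    (stoppingCut n c k δ).Finite ∧ ∑ᶠ v ∈ stoppingCut n c k δ, wt p k v = 1 := by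
  have hc0 : ∀ k j, j < n k → 0 ≤ c k j := fun k j hj => (hc k j hj).le
  rcases le_or_gt 1 δ with hδ1 | hδ1
  · simp [stoppingCut_of_one_le hc0 hc1 hδ1, wt_nil]
  induction N generalizing k δ with
  | zero => exact absurd hN (pow_le_one₀ hδ.le hδ1.le).not_gt
  | succ N ih =>
    have hchild : ∀ j < n k, (stoppingCut n c (k + 1) (δ / c k j)).Finite ∧
        ∑ᶠ v ∈ stoppingCut n c (k + 1) (δ / c k j), wt p (k + 1) v = 1 := by
      intro j hj
      have hcj := hc k j hj
      have hρ0 : 0 ≤ ρ := (pow_nonneg hcj.le d).trans (hρ k j hj)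
      have hN' : ρ ^ N < (δ / c k j) ^ d := by
        rw [div_pow, lt_div_iff₀ (pow_pos hcj d)]
        calc ρ ^ N * c k j ^ d ≤ ρ ^ N * ρ := by gcongr; exact hρ k j hj
          _ = ρ ^ (N + 1) := (pow_succ ρ N).symm
          _ < δ ^ d := hN
      rcases le_or_gt 1 (δ / c k j) with h1 | h1
      · simp [stoppingCut_of_one_le hc0 hc1 h1, wt_nil]
      · exact ih (div_pos hδ hcj) hN' h1
    have hdisj : (Finset.range (n k) : Set ℕ).PairwiseDisjoint
        fun j => (j :: ·) '' stoppingCut n c (k + 1) (δ / c k j) := by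
      intro i _ j _ hij
      refine Set.disjoint_left.2 ?_
      rintro _ ⟨t, -, rfl⟩ ⟨t', -, h⟩
      exact hij (List.cons.inj h).1.symm
    have hfin : ∀ j ∈ (Finset.range (n k) : Set ℕ),
        ((j :: ·) '' stoppingCut n c (k + 1) (δ / c k j)).Finite :=
      fun j hj => (hchild j (mem_range.1 hj)).1.image _
    rw [stoppingCut_eq_biUnion hc hδ1]
    refine ⟨(finite_toSet _).biUnion hfin, ?_⟩
    rw [finsum_mem_biUnion hdisj (finite_toSet _) hfin, ← hp k, ← finsum_mem_coe_finset]
    refine finsum_mem_congr rfl fun j hj => ?_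
    rw [finsum_mem_image List.cons_injective.injOn]
    simp only [wt_cons]
    rw [← mul_finsum_mem, (hchild j (mem_range.1 hj)).2, mul_one]

end Words

theorem stmt_7_general (d : ℕ) (n : ℕ → ℕ) (hn : ∀ k, 2 ≤ n k)
    (c : ℕ → ℕ → ℝ) (cstar : ℝ) (hcstar : 0 < cstar)
    (hc : ∀ k j, j < n k → c k j ∈ Set.Ioo (0 : ℝ) 1)
    (hlb : ∀ k j, j < n k → cstar ≤ c k j)
    (hsum : ∀ k, ∑ j ∈ Finset.range (n k), (c k j) ^ d ≤ 1)
    (u : List ℕ) (s : ℝ) (δ : ℝ) (hδ : δ ∈ Set.Ioo 0 cstar) :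
    ∑ᶠ v ∈ stoppingSet n c u δ,
        (wt c u.length v) ^ s /
          ∏ i ∈ Finset.range v.length,
            ∑ q ∈ Finset.range (n (u.length + i)), (c (u.length + i) q) ^ s = 1 := by
  have hc_pos : ∀ k j, j < n k → 0 < c k j := fun k j hj => (hc k j hj).1
  have hn0 : ∀ k, 0 < n k := fun k => by linarith [hn k]
  have hδ1 : δ < 1 := (hδ.2.trans_le (hlb 0 0 (hn0 0))).trans (hc 0 0 (hn0 0)).2
  have hρ : ∀ k j, j < n k → c k j ^ d ≤ 1 - cstar ^ d := fun k _ hj =>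
    pow_le_one_sub_pow_of_sum_pow_le_one_s7 (hn k) hcstar.le (hlb k) (hsum k) hj
  obtain ⟨N, hN⟩ := exists_pow_lt_of_lt_one (pow_pos hδ.1 d) (sub_lt_self 1 (pow_pos hcstar d))
  have hp : ∀ k, ∑ j ∈ range (n k), c k j ^ s / ∑ q ∈ range (n k), c k q ^ s = 1 := fun k => by
    refine (sum_div _ _ _).symm.trans (div_self (sum_pos (fun q hq => ?_) ?_).ne')
    · exact Real.rpow_pos_of_pos (hc_pos k q (mem_range.1 hq)) s
    · exact nonempty_range_iff.2 (hn0 k).ne'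
  rw [stoppingSet_eq_stoppingCut hδ1, finsum_mem_congr rfl fun v hv =>
    wt_rpow_div_prod_sum_rpow (fun k j hj => (hc_pos k j hj).le) s hv.1]
  exact (stoppingCut_finite_and_finsum_wt_eq_one hp hc_pos (fun k j hj => (hc k j hj).2.le) hρ N
    hδ.1 hN).2

/-- the stopping-set identity
`1 = ∑_{u*v ∈ A_u(δ)} c_v^s / ∏_{p=|u|+1}^{|u|+|v|} ∑_{q=1}^{n_p} c_{p,q}^s`. -/
theorem stmt_7 (d : ℕ) (hd : 1 ≤ d) (n : ℕ → ℕ) (hn : ∀ k, 2 ≤ n k)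
    (c : ℕ → ℕ → ℝ) (cstar : ℝ) (hcstar : 0 < cstar)
    (hc : ∀ k j, j < n k → c k j ∈ Set.Ioo (0 : ℝ) 1)
    (hlb : ∀ k j, j < n k → cstar ≤ c k j)
    (hsum : ∀ k, ∑ j ∈ Finset.range (n k), (c k j) ^ d ≤ 1)
    (u : List ℕ) (s : ℝ) (hs : 0 < s) (δ : ℝ) (hδ : δ ∈ Set.Ioo 0 cstar) :
    ∑ᶠ v ∈ stoppingSet n c u δ,
        (wt c u.length v) ^ s /
          ∏ i ∈ Finset.range v.length,
            ∑ q ∈ Finset.range (n (u.length + i)), (c (u.length + i) q) ^ s = 1 :=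
  stmt_7_general d n hn c cstar hcstar hc hlb hsum u s δ hδ
end

section
/- Define the sequence c_k ∈ {1/4, 1/8, 1/16} by: c_k = 1/4 if k ∈ [p_i+1, p_i+i] for some i; c_k = 1/8 if k ∈ [p_i+i+1, p_{i+1}] for even i; c_k = 1/16 if k ∈ [p_i+i+1, p_{i+1}] for odd i, where p_i is increasing with p_{i+1} − p_i > i and p_{i−1}/(p_i − p_{i−1}) → 0 and i/(p_i − p_{i−1}) → 0. With n_k ≡ 2, one has liminf_k log(2^k)/(−log(c_1⋯c_k)) = 1/4, limsup_k log(2^k)/(−log(c_1⋯c_k)) = 1/3, and lim_m sup_k log(2^{m+1})/(−log(c_{k+1}⋯c_{k+m+1})) = 1/2. -/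
/-!
Write `c_j = 2^{-a_j}` with `a_j ∈ {2, 3, 4}`; the quantities become `k / (a_1 + ⋯ + a_k)` and
`(m + 1) / (a_{k+1} + ⋯ + a_{k+m+1})`. Since `p_i + i = o(p_{i+1})`, at the end `p_{i+1}` of the
long block `(p_i + i, p_{i+1}]` the average exponent is close to `4` (odd `i`) or `3` (even `i`),
which gives `1/4` and `1/3` along these subsequences. Everywhere else the exponent `2` occupies
only `o(k)` of the first `k` positions, so the average exponent stays above `3 - o(1)`. Every
window has average exponent at least `2`, with equality on the block `(p_{m+1}, p_{m+1} + m + 1]`.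
-/

open Finset Filter Topology

section Counting

variable {α : Type*} [DecidableEq α] {s U : Finset α} {a : α → ℝ} {lo hi : ℝ}

lemma le_sum_of_le_of_le_off (hlo : ∀ j ∈ s, lo ≤ a j) (hhi : ∀ j ∈ s, j ∉ U → hi ≤ a j)
    (hle : lo ≤ hi) : hi * #s - (hi - lo) * #U ≤ ∑ j ∈ s, a j := by
  have hin : #(s.filter (· ∈ U)) • lo ≤ ∑ j ∈ s.filter (· ∈ U), a j :=
    card_nsmul_le_sum _ _ lo fun j hj => hlo j (mem_filter.1 hj).1
  have hout : #(s.filter (· ∉ U)) • hi ≤ ∑ j ∈ s.filter (· ∉ U), a j :=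
    card_nsmul_le_sum _ _ hi fun j hj => hhi j (mem_filter.1 hj).1 (mem_filter.1 hj).2
  have hcard : (#(s.filter (· ∈ U)) : ℝ) + #(s.filter (· ∉ U)) = #s := by
    exact_mod_cast card_filter_add_card_filter_not _
  have hU : (#(s.filter (· ∈ U)) : ℝ) ≤ #U := by
    exact_mod_cast card_le_card fun j hj => (mem_filter.1 hj).2
  rw [nsmul_eq_mul] at hin hout
  rw [← sum_filter_add_sum_filter_not s (· ∈ U), ← hcard]
  linarith [mul_le_mul_of_nonneg_left hU (sub_nonneg.2 hle)]

lemma sum_le_of_le_of_le_off (hhi : ∀ j ∈ s, a j ≤ hi) (hlo : ∀ j ∈ s, j ∉ U → a j ≤ lo)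
    (hle : lo ≤ hi) : ∑ j ∈ s, a j ≤ lo * #s + (hi - lo) * #U := by
  have := le_sum_of_le_of_le_off (a := fun j => -a j) (fun j hj => neg_le_neg (hhi j hj))
    (fun j hj hjU => neg_le_neg (hlo j hj hjU)) (neg_le_neg hle)
  rw [sum_neg_distrib] at this
  linarith

end Counting

lemma div_le_inv_of_mul_le {x y r : ℝ} (hr : 0 < r) (hx : 0 ≤ x) (h : r * x ≤ y) :
    x / y ≤ r⁻¹ := by
  refine div_le_of_le_mul₀ (by nlinarith) (inv_nonneg.2 hr.le) ?_
  rwa [inv_mul_eq_div, le_div_iff₀ hr, mul_comm]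

section Limits

variable {u w : ℕ → ℝ} {L : ℝ}

lemma tendsto_two_mul_add_atTop (n : ℕ) : Tendsto (fun i : ℕ => 2 * i + n) atTop atTop :=
  tendsto_atTop_mono (fun i => (by omega : i ≤ 2 * i + n)) tendsto_id

lemma liminf_le_of_comp_le_of_tendsto {φ : ℕ → ℕ} (hu : IsBoundedUnder (· ≥ ·) atTop u)
    (hφ : Tendsto φ atTop atTop) (hw : Tendsto w atTop (𝓝 L))
    (hle : ∀ᶠ i in atTop, u (φ i) ≤ w i) : liminf u atTop ≤ L := by
  refine le_of_forall_pos_le_add fun ε hε => liminf_le_of_frequently_le ?_ hu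
  refine hφ.frequently (Eventually.frequently ?_)
  filter_upwards [hle, hw.eventually (eventually_le_nhds (lt_add_of_pos_right L hε))]
    with i hi hwi
  exact hi.trans hwi

lemma le_limsup_of_le_comp_of_tendsto {φ : ℕ → ℕ} (hu : IsBoundedUnder (· ≤ ·) atTop u)
    (hφ : Tendsto φ atTop atTop) (hw : Tendsto w atTop (𝓝 L))
    (hle : ∀ᶠ i in atTop, w i ≤ u (φ i)) : L ≤ limsup u atTop := by
  refine le_of_forall_sub_le fun ε hε => le_limsup_of_frequently_le ?_ hu
  refine hφ.frequently (Eventually.frequently ?_)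
  filter_upwards [hle, hw.eventually (eventually_ge_nhds (sub_lt_self L hε))] with i hi hwi
  exact hwi.trans hi

lemma limsup_le_of_forall_mem_Ioc_le {p : ℕ → ℕ} (hp : StrictMono p)
    (hu : IsCoboundedUnder (· ≤ ·) atTop u) (hw : Tendsto w atTop (𝓝 L))
    (hle : ∀ᶠ i in atTop, ∀ k ∈ Ioc (p i) (p (i + 1)), u k ≤ w i) : limsup u atTop ≤ L := by
  refine le_of_forall_pos_le_add fun ε hε => limsup_le_of_le hu ?_
  obtain ⟨i₀, hi₀⟩ := eventually_atTop.1
    (hle.and (hw.eventually (eventually_le_nhds (lt_add_of_pos_right L hε))))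
  filter_upwards [eventually_gt_atTop (p i₀)] with k hk
  obtain ⟨i, hik, hki⟩ := hp.exists_between_of_tendsto_atTop hp.tendsto_atTop
    ((hp.monotone (Nat.zero_le i₀)).trans_lt hk)
  have hi : i₀ ≤ i := Nat.lt_succ_iff.1 (hp.lt_iff_lt.1 (hk.trans_le hki))
  exact ((hi₀ i hi).1 k (mem_Ioc.2 ⟨hik, hki⟩)).trans (hi₀ i hi).2

end Limits

section Blocks

variable {p : ℕ → ℕ}

variable (p) in
/-- `p i + i + (i + 1)` bounds the number of positions up to `p (i + 2)` lying in a block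
`(p j, p j + j]`. -/
noncomputable def blockRatio (i : ℕ) : ℝ := ((p i : ℝ) + 2 * i + 1) / p (i + 1)

lemma blockRatio_nonneg (i : ℕ) : 0 ≤ blockRatio p i := by
  unfold blockRatio; positivity

lemma blockRatio_mul (hp : StrictMono p) (i : ℕ) :
    blockRatio p i * p (i + 1) = p i + 2 * i + 1 := by
  have : (0 : ℝ) < p (i + 1) := by exact_mod_cast (Nat.zero_le _).trans_lt (hp i.lt_succ_self)
  exact div_mul_cancel₀ _ this.ne'

lemma tendsto_blockRatio (hp : StrictMono p)
    (hlim : Tendsto (fun i : ℕ => (p i : ℝ) / ((p (i + 1) : ℝ) - (p i : ℝ))) atTop (𝓝 0)) :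
    Tendsto (blockRatio p) atTop (𝓝 0) := by
  have h4 := hlim.const_mul 4
  rw [mul_zero] at h4
  refine tendsto_of_tendsto_of_tendsto_of_le_of_le' tendsto_const_nhds h4
    (Eventually.of_forall blockRatio_nonneg) ?_
  filter_upwards [eventually_ge_atTop 1] with i hi
  have hip : (i : ℝ) ≤ p i := by exact_mod_cast hp.id_le i
  have hi1 : (1 : ℝ) ≤ i := by exact_mod_cast hi
  have hgap : (0 : ℝ) < p (i + 1) - p i := sub_pos.2 (by exact_mod_cast hp i.lt_succ_self)
  rw [blockRatio, ← mul_div_assoc]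
  exact div_le_div₀ (by positivity) (by linarith) hgap (by linarith [(p i).cast_nonneg (α := ℝ)])

end Blocks

section Exponents

variable {p : ℕ → ℕ} {a : ℕ → ℝ}

/-- The paper's `s_{0,k}` when `c_j = 2^{-a_j}`. -/
noncomputable def dimRatio (a : ℕ → ℝ) (k : ℕ) : ℝ := k / ∑ j ∈ Icc 1 k, a j

lemma dimRatio_nonneg (ha2 : ∀ j, 2 ≤ a j) (k : ℕ) : 0 ≤ dimRatio a k :=
  div_nonneg k.cast_nonneg (sum_nonneg fun j _ => zero_le_two.trans (ha2 j))

lemma two_mul_le_sum_Icc (ha2 : ∀ j, 2 ≤ a j) (k n : ℕ) :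
    2 * (n : ℝ) ≤ ∑ j ∈ Icc (k + 1) (k + n), a j := by
  simpa [mul_comm] using card_nsmul_le_sum (Icc (k + 1) (k + n)) a 2 fun j _ => ha2 j

lemma dimRatio_le_half (ha2 : ∀ j, 2 ≤ a j) (k : ℕ) : dimRatio a k ≤ 2⁻¹ :=
  div_le_inv_of_mul_le two_pos k.cast_nonneg (by simpa using two_mul_le_sum_Icc ha2 0 k)

lemma inv_le_dimRatio_of_sum_le {r : ℝ} {k : ℕ} (ha2 : ∀ j, 2 ≤ a j) (hk : 1 ≤ k) (hr : 0 < r)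
    (h : ∑ j ∈ Icc 1 k, a j ≤ r * k) : r⁻¹ ≤ dimRatio a k := by
  have hS : 0 < ∑ j ∈ Icc 1 k, a j := by
    have := two_mul_le_sum_Icc ha2 0 k
    simp only [zero_add] at this
    have : (1 : ℝ) ≤ k := by exact_mod_cast hk
    linarith
  rwa [dimRatio, le_div_iff₀ hS, inv_mul_le_iff₀ hr]

lemma quarter_le_dimRatio (ha2 : ∀ j, 2 ≤ a j) (ha4 : ∀ j, a j ≤ 4) {k : ℕ} (hk : 1 ≤ k) :
    4⁻¹ ≤ dimRatio a k :=
  inv_le_dimRatio_of_sum_le ha2 hk four_pos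
    (by simpa [mul_comm] using sum_le_card_nsmul (Icc 1 k) a 4 fun j _ => ha4 j)

lemma dimRatio_block_end_le (hp : StrictMono p) (ha2 : ∀ j, 2 ≤ a j) {i : ℕ}
    (hblock : ∀ k, p i + i < k → k ≤ p (i + 1) → 4 ≤ a k) (hρ : blockRatio p i < 2) :
    dimRatio a (p (i + 1)) ≤ (4 - 2 * blockRatio p i)⁻¹ := by
  refine div_le_inv_of_mul_le (by linarith) (Nat.cast_nonneg _) ?_
  have hsum := le_sum_of_le_of_le_off (s := Icc 1 (p (i + 1))) (U := Icc 1 (p i + i))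
    (lo := 2) (hi := 4) (fun j _ => ha2 j) (fun j hj hjU => hblock j (by simp_all) (by simp_all))
    (by norm_num)
  simp only [Nat.card_Icc, add_tsub_cancel_right, Nat.cast_add] at hsum
  linarith [blockRatio_mul hp i]

lemma inv_le_dimRatio_block_end (hp : StrictMono p) (ha2 : ∀ j, 2 ≤ a j) (ha4 : ∀ j, a j ≤ 4)
    {i : ℕ} (hblock : ∀ k, p i + i < k → k ≤ p (i + 1) → a k ≤ 3) :
    (3 + blockRatio p i)⁻¹ ≤ dimRatio a (p (i + 1)) := by
  refine inv_le_dimRatio_of_sum_le ha2 ((Nat.zero_le _).trans_lt (hp i.lt_succ_self))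
    (by linarith [blockRatio_nonneg (p := p) i]) ?_
  have hsum := sum_le_of_le_of_le_off (s := Icc 1 (p (i + 1))) (U := Icc 1 (p i + i))
    (lo := 3) (hi := 4) (fun j _ => ha4 j) (fun j hj hjU => hblock j (by simp_all) (by simp_all))
    (by norm_num)
  simp only [Nat.card_Icc, add_tsub_cancel_right, Nat.cast_add] at hsum
  linarith [blockRatio_mul hp i]

lemma dimRatio_le_of_mem_Ioc (hp : StrictMono p) (ha2 : ∀ j, 2 ≤ a j)
    (hlong : ∀ i k, 1 ≤ i → p i + i < k → k ≤ p (i + 1) → 3 ≤ a k) {i k : ℕ} (hi : 1 ≤ i)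
    (hk : k ∈ Ioc (p (i + 1)) (p (i + 2))) (hρ : blockRatio p i < 3) :
    dimRatio a k ≤ (3 - blockRatio p i)⁻¹ := by
  rw [mem_Ioc] at hk
  refine div_le_inv_of_mul_le (by linarith) k.cast_nonneg ?_
  set U := Icc 1 (p i + i) ∪ Ioc (p (i + 1)) (p (i + 1) + (i + 1))
  have hoff : ∀ j ∈ Icc 1 k, j ∉ U → 3 ≤ a j := by
    intro j hj hjU
    simp only [U, mem_union, mem_Icc, mem_Ioc, not_or, not_and, not_le] at hj hjU
    rcases le_or_gt j (p (i + 1)) with hj' | hj'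
    · exact hlong i j hi (hjU.1 hj.1) hj'
    · exact hlong (i + 1) j (by omega) (hjU.2 hj') (hj.2.trans hk.2)
  have hU : (#U : ℝ) ≤ blockRatio p i * k := by
    have hcard : #U ≤ p i + i + (i + 1) := (card_union_le _ _).trans (by simp)
    have hB : (p (i + 1) : ℝ) ≤ k := by exact_mod_cast hk.1.le
    calc (#U : ℝ) ≤ blockRatio p i * p (i + 1) := by
          rw [blockRatio_mul hp]; exact_mod_cast hcard.trans (by omega)
      _ ≤ blockRatio p i * k := mul_le_mul_of_nonneg_left hB (blockRatio_nonneg i)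
  have hsum := le_sum_of_le_of_le_off (lo := 2) (hi := 3) (fun j _ => ha2 j) hoff (by norm_num)
  simp only [Nat.card_Icc, add_tsub_cancel_right] at hsum
  linarith

lemma liminf_dimRatio (hp : StrictMono p) (hρ : Tendsto (blockRatio p) atTop (𝓝 0))
    (ha2 : ∀ j, 2 ≤ a j) (ha4 : ∀ j, a j ≤ 4)
    (hodd : ∀ i k, 1 ≤ i → Odd i → p i + i < k → k ≤ p (i + 1) → 4 ≤ a k) :
    liminf (dimRatio a) atTop = 4⁻¹ := by
  have hρodd := hρ.comp (tendsto_two_mul_add_atTop 1)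
  have hw : Tendsto (fun i => (4 - 2 * blockRatio p (2 * i + 1))⁻¹) atTop (𝓝 4⁻¹) := by
    simpa using
      (tendsto_const_nhds.sub (hρodd.const_mul 2)).inv₀ (by norm_num : (4 : ℝ) - 2 * 0 ≠ 0)
  refine le_antisymm (liminf_le_of_comp_le_of_tendsto
    (isBoundedUnder_of ⟨0, dimRatio_nonneg ha2⟩)
    (hp.tendsto_atTop.comp (tendsto_two_mul_add_atTop 2)) hw ?_) ?_
  · filter_upwards [hρodd.eventually (eventually_lt_nhds two_pos)] with i hi
    exact dimRatio_block_end_le hp ha2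
      (hodd (2 * i + 1) · (by omega) (odd_two_mul_add_one i)) hi
  · exact le_liminf_of_le (isCoboundedUnder_ge_of_le atTop (dimRatio_le_half ha2))
      (eventually_atTop.2 ⟨1, fun k hk => quarter_le_dimRatio ha2 ha4 hk⟩)

lemma limsup_dimRatio (hp : StrictMono p) (hρ : Tendsto (blockRatio p) atTop (𝓝 0))
    (ha2 : ∀ j, 2 ≤ a j) (ha4 : ∀ j, a j ≤ 4)
    (hlong : ∀ i k, 1 ≤ i → p i + i < k → k ≤ p (i + 1) → 3 ≤ a k)
    (heven : ∀ i k, 1 ≤ i → Even i → p i + i < k → k ≤ p (i + 1) → a k ≤ 3) :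
    limsup (dimRatio a) atTop = 3⁻¹ := by
  have hρeven := hρ.comp (tendsto_two_mul_add_atTop 2)
  have hw : Tendsto (fun i => (3 + blockRatio p (2 * i + 2))⁻¹) atTop (𝓝 3⁻¹) := by
    simpa using (tendsto_const_nhds.add hρeven).inv₀ (by norm_num : (3 : ℝ) + 0 ≠ 0)
  have hw' : Tendsto (fun i => (3 - blockRatio p i)⁻¹) atTop (𝓝 3⁻¹) := by
    simpa using (tendsto_const_nhds.sub hρ).inv₀ (by norm_num : (3 : ℝ) - 0 ≠ 0)
  refine le_antisymm (limsup_le_of_forall_mem_Ioc_le (p := fun i => p (i + 1))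
    (hp.comp fun _ _ h => Nat.succ_lt_succ h) (isCoboundedUnder_le_of_le atTop
      (dimRatio_nonneg ha2)) hw' ?_) (le_limsup_of_le_comp_of_tendsto
    (isBoundedUnder_of ⟨2⁻¹, dimRatio_le_half ha2⟩)
    (hp.tendsto_atTop.comp (tendsto_two_mul_add_atTop 3)) hw (Eventually.of_forall fun i => ?_))
  · filter_upwards [eventually_ge_atTop 1, hρ.eventually (eventually_lt_nhds three_pos)]
      with i hi hρi k hk
    exact dimRatio_le_of_mem_Ioc hp ha2 hlong hi hk hρi
  · exact inv_le_dimRatio_block_end hp ha2 ha4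
      (heven (2 * i + 2) · (by omega) ⟨i + 1, by ring⟩)

lemma iSup_window_ratio_eq_inv_two (ha2 : ∀ j, 2 ≤ a j) {m : ℕ}
    (hwin : ∃ k, ∀ j ∈ Icc (k + 1) (k + m + 1), a j = 2) :
    ⨆ k : ℕ, ((m : ℝ) + 1) / ∑ j ∈ Icc (k + 1) (k + m + 1), a j = 2⁻¹ := by
  obtain ⟨k₀, hk₀⟩ := hwin
  have hle : ∀ k : ℕ, ((m : ℝ) + 1) / ∑ j ∈ Icc (k + 1) (k + m + 1), a j ≤ 2⁻¹ := fun k =>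
    div_le_inv_of_mul_le two_pos (by positivity) (by
      simpa [add_assoc] using two_mul_le_sum_Icc ha2 k (m + 1))
  refine le_antisymm (ciSup_le hle) (le_ciSup_of_le ⟨2⁻¹, Set.forall_mem_range.2 hle⟩ k₀ ?_)
  rw [sum_congr rfl hk₀, sum_const, Nat.card_Icc, nsmul_eq_mul]
  push_cast [show k₀ + m + 1 + 1 - (k₀ + 1) = m + 1 by omega]
  field_simp
  norm_num

end Exponents

lemma neg_logb_two_one_div_two_pow (n : ℕ) : -Real.logb 2 (1 / 2 ^ n) = n := by
  rw [one_div, Real.logb_inv, neg_neg, Real.logb_pow, Real.logb_self_eq_one one_lt_two, mul_one]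

lemma mul_log_two_div_neg_log_prod {c : ℕ → ℝ} (hc : ∀ j, 0 < c j) (s : Finset ℕ) (x : ℝ) :
    x * Real.log 2 / -Real.log (∏ j ∈ s, c j) = x / ∑ j ∈ s, -Real.logb 2 (c j) := by
  rw [Real.log_prod fun j _ => (hc j).ne', ← div_div_eq_mul_div]
  simp only [Real.logb, neg_div, sum_neg_distrib, sum_div]

theorem stmt_13_general (p : ℕ → ℕ) (hpmono : StrictMono p)
    (hlim1 : Tendsto (fun i : ℕ => (p i : ℝ) / ((p (i + 1) : ℝ) - (p i : ℝ)))
      atTop (nhds 0))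
    (c : ℕ → ℝ)
    (hcrange : ∀ k, c k = 1 / 4 ∨ c k = 1 / 8 ∨ c k = 1 / 16)
    (hc4 : ∀ i k, 1 ≤ i → p i + 1 ≤ k → k ≤ p i + i → c k = 1 / 4)
    (hc8 : ∀ i k, 1 ≤ i → Even i → p i + i + 1 ≤ k → k ≤ p (i + 1) → c k = 1 / 8)
    (hc16 : ∀ i k, 1 ≤ i → Odd i → p i + i + 1 ≤ k → k ≤ p (i + 1) → c k = 1 / 16) :
    Filter.liminf (fun k : ℕ =>
        ((k : ℝ) * Real.log 2) / (-Real.log (∏ i ∈ Finset.Icc 1 k, c i))) atTop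
      = 1 / 4 ∧
    Filter.limsup (fun k : ℕ =>
        ((k : ℝ) * Real.log 2) / (-Real.log (∏ i ∈ Finset.Icc 1 k, c i))) atTop
      = 1 / 3 ∧
    Tendsto (fun m : ℕ => ⨆ k : ℕ,
        (((m : ℝ) + 1) * Real.log 2) /
          (-Real.log (∏ i ∈ Finset.Icc (k + 1) (k + m + 1), c i)))
      atTop (nhds (1 / 2)) := by
  have hc_pos (j : ℕ) : 0 < c j := by rcases hcrange j with h | h | h <;> rw [h] <;> norm_num
  simp only [mul_log_two_div_neg_log_prod hc_pos, one_div]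
  set a : ℕ → ℝ := fun j => -Real.logb 2 (c j)
  have ha_of {j : ℕ} (n : ℕ) (h : c j = 1 / 2 ^ n) : a j = n := by
    rw [show a j = -Real.logb 2 (c j) from rfl, h, neg_logb_two_one_div_two_pow]
  have hcases (j : ℕ) : a j = 2 ∨ a j = 3 ∨ a j = 4 := by
    rcases hcrange j with h | h | h
    exacts [.inl (by simpa using ha_of 2 (by rw [h]; norm_num)),
      .inr (.inl (by simpa using ha_of 3 (by rw [h]; norm_num))),
      .inr (.inr (by simpa using ha_of 4 (by rw [h]; norm_num)))]
  have ha2 (j : ℕ) : 2 ≤ a j := by rcases hcases j with h | h | h <;> linarith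
  have ha4 (j : ℕ) : a j ≤ 4 := by rcases hcases j with h | h | h <;> linarith
  have heven (i k : ℕ) (hi : 1 ≤ i) (he : Even i) (h₁ : p i + i < k) (h₂ : k ≤ p (i + 1)) :
      a k = 3 := by simpa using ha_of 3 (by rw [hc8 i k hi he h₁ h₂]; norm_num)
  have hodd (i k : ℕ) (hi : 1 ≤ i) (ho : Odd i) (h₁ : p i + i < k) (h₂ : k ≤ p (i + 1)) :
      a k = 4 := by simpa using ha_of 4 (by rw [hc16 i k hi ho h₁ h₂]; norm_num)
  have hρ := tendsto_blockRatio hpmono hlim1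
  refine ⟨liminf_dimRatio hpmono hρ ha2 ha4 fun i k hi ho h₁ h₂ => (hodd i k hi ho h₁ h₂).ge,
    limsup_dimRatio hpmono hρ ha2 ha4 (fun i k hi h₁ h₂ => ?_)
      fun i k hi he h₁ h₂ => (heven i k hi he h₁ h₂).le,
    tendsto_const_nhds.congr fun m => (iSup_window_ratio_eq_inv_two ha2 ⟨p (m + 1), ?_⟩).symm⟩
  · rcases Nat.even_or_odd i with he | ho
    exacts [(heven i k hi he h₁ h₂).ge, (hodd i k hi ho h₁ h₂).ge.trans' (by norm_num)]
  · intro j hj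
    rw [mem_Icc] at hj
    simpa using ha_of 2 (by rw [hc4 (m + 1) j (by omega) hj.1 (by omega)]; norm_num)

/-- the computation underlying the example with
`dim_H = 1/4 < dim_P = 1/3 < dim_A = 1/2`. With `n_k ≡ 2` and the ratios
`c_k ∈ {1/4, 1/8, 1/16}` prescribed by blocks determined by the sequence `p_i`,
the quantities `s_{0,k} = log 2^k / (−log(c_1⋯c_k))` have liminf `1/4` and
limsup `1/3`, while `lim_m sup_k log 2^{m+1} / (−log(c_{k+1}⋯c_{k+m+1})) = 1/2`. -/
theorem stmt_13 (p : ℕ → ℕ) (hpmono : StrictMono p)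
    (hgap : ∀ i, 1 ≤ i → i < p (i + 1) - p i)
    (hlim1 : Tendsto (fun i : ℕ => (p i : ℝ) / ((p (i + 1) : ℝ) - (p i : ℝ)))
      atTop (nhds 0))
    (hlim2 : Tendsto (fun i : ℕ => (i : ℝ) / ((p (i + 1) : ℝ) - (p i : ℝ)))
      atTop (nhds 0))
    (c : ℕ → ℝ)
    (hcrange : ∀ k, c k = 1 / 4 ∨ c k = 1 / 8 ∨ c k = 1 / 16)
    (hc4 : ∀ i k, 1 ≤ i → p i + 1 ≤ k → k ≤ p i + i → c k = 1 / 4)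
    (hc8 : ∀ i k, 1 ≤ i → Even i → p i + i + 1 ≤ k → k ≤ p (i + 1) → c k = 1 / 8)
    (hc16 : ∀ i k, 1 ≤ i → Odd i → p i + i + 1 ≤ k → k ≤ p (i + 1) → c k = 1 / 16) :
    Filter.liminf (fun k : ℕ =>
        ((k : ℝ) * Real.log 2) / (-Real.log (∏ i ∈ Finset.Icc 1 k, c i))) atTop
      = 1 / 4 ∧
    Filter.limsup (fun k : ℕ =>
        ((k : ℝ) * Real.log 2) / (-Real.log (∏ i ∈ Finset.Icc 1 k, c i))) atTop
      = 1 / 3 ∧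
    Tendsto (fun m : ℕ => ⨆ k : ℕ,
        (((m : ℝ) + 1) * Real.log 2) /
          (-Real.log (∏ i ∈ Finset.Icc (k + 1) (k + m + 1), c i)))
      atTop (nhds (1 / 2)) :=
  stmt_13_general p hpmono hlim1 c hcrange hc4 hc8 hc16
end
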